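/- arXiv:2205.04063 — 6 statements merged into one kernel-verified Lean document; each statement's English description precedes it below -/
import Mathlib

section
/- For the simplex S with vertices x^0,...,x^n (where x^i has last i coordinates 1 and the rest 0) and c = (1,2,...,n), if 0 ≤ i < j ≤ n, then c·(x^j - x^i)/‖x^j - x^i‖₁ ≤ c·(x^{i+1} - x^i)/‖x^{i+1} - x^i‖₁, with equality if and only if j = i+1. -/
/-- `xv n i` is the point of `ℝ^n` whose last `i` coordinates equal `1`
and whose first `n - i` coordinates equal `0`. -/
def xv (n i : ℕ) : Fin n → ℝ := fun k => if n - i ≤ (k : ℕ) then 1 else 0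

/-- standard dot product on `ℝ^n` -/
noncomputable def dotp {n : ℕ} (c y : Fin n → ℝ) : ℝ := ∑ k, c k * y k

/-- ℓ¹-norm on `ℝ^n` -/
noncomputable def l1 {n : ℕ} (y : Fin n → ℝ) : ℝ := ∑ k, |y k|

lemma diff_eq (n i j : ℕ) (hij : i ≤ j) (k : Fin n) :
    xv n j k - xv n i k = if (k : ℕ) ∈ Finset.Ico (n - j) (n - i) then 1 else 0 := by
  have h1 : n - j ≤ n - i := by omega
  simp only [xv, Finset.mem_Ico]
  by_cases h2 : n - i ≤ (k : ℕ)
  · rw [if_pos (le_trans h1 h2), if_pos h2,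
      if_neg (by omega : ¬(n - j ≤ (k : ℕ) ∧ (k : ℕ) < n - i))]
    norm_num
  · by_cases h3 : n - j ≤ (k : ℕ)
    · rw [if_pos h3, if_neg h2, if_pos ⟨h3, by omega⟩]; norm_num
    · rw [if_neg h3, if_neg h2,
        if_neg (by omega : ¬(n - j ≤ (k : ℕ) ∧ (k : ℕ) < n - i))]
      norm_num

lemma dot_eq (n i j : ℕ) (hij : i ≤ j) (hjn : j ≤ n)
    (c : Fin n → ℝ) (hc : ∀ k : Fin n, c k = (k : ℕ) + 1) :
    dotp c (fun k => xv n j k - xv n i k)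
      = ∑ k ∈ Finset.Ico (n - j) (n - i), ((k : ℝ) + 1) := by
  unfold dotp
  have : ∀ k : Fin n, c k * (xv n j k - xv n i k)
      = if (k : ℕ) ∈ Finset.Ico (n - j) (n - i) then ((k : ℕ) : ℝ) + 1 else 0 := by
    intro k
    rw [diff_eq n i j hij k, hc k, mul_ite, mul_one, mul_zero]
  rw [Finset.sum_congr rfl (fun k _ => this k)]
  rw [Fin.sum_univ_eq_sum_range (fun k => if k ∈ Finset.Ico (n - j) (n - i) then (k : ℝ) + 1 else 0)]
  rw [Finset.sum_ite_mem]
  congr 1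
  rw [Finset.inter_eq_right]
  intro k hk
  simp only [Finset.mem_Ico] at hk
  simp only [Finset.mem_range]
  omega

lemma l1_eq (n i j : ℕ) (hij : i ≤ j) (hjn : j ≤ n) :
    l1 (fun k => xv n j k - xv n i k) = ((j : ℝ) - i) := by
  unfold l1
  have : ∀ k : Fin n, |xv n j k - xv n i k|
      = if (k : ℕ) ∈ Finset.Ico (n - j) (n - i) then (1:ℝ) else 0 := by
    intro k
    rw [diff_eq n i j hij k]
    split_ifs <;> norm_num
  rw [Finset.sum_congr rfl (fun k _ => this k)]
  rw [Fin.sum_univ_eq_sum_range (fun k => if k ∈ Finset.Ico (n - j) (n - i) then (1:ℝ) else 0)]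
  rw [Finset.sum_ite_mem]
  have hint : Finset.range n ∩ Finset.Ico (n - j) (n - i) = Finset.Ico (n - j) (n - i) := by
    rw [Finset.inter_eq_right]
    intro k hk
    simp only [Finset.mem_Ico] at hk
    simp only [Finset.mem_range]
    omega
  rw [hint, Finset.sum_const, Nat.card_Ico, nsmul_eq_mul, mul_one]
  rw [show n - i - (n - j) = j - i by omega]
  push_cast [hij]
  ring

theorem stmt_0 (n i j : ℕ) (hij : i < j) (hjn : j ≤ n)
    (c : Fin n → ℝ) (hc : ∀ k : Fin n, c k = (k : ℕ) + 1) :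
    dotp c (fun k => xv n (j) k - xv n i k) / l1 (fun k => xv n (j) k - xv n i k)
      ≤ dotp c (fun k => xv n (i+1) k - xv n i k) / l1 (fun k => xv n (i+1) k - xv n i k)
    ∧ (dotp c (fun k => xv n (j) k - xv n i k) / l1 (fun k => xv n (j) k - xv n i k)
      = dotp c (fun k => xv n (i+1) k - xv n i k) / l1 (fun k => xv n (i+1) k - xv n i k)
      ↔ j = i + 1) := by
  set a := n - j with ha
  set b := n - i with hb
  have hab : a < b := by omega
  have hbn : b ≤ n := by omega
  have ha1 : n - (i + 1) = b - 1 := by omega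
  have hb1 : 1 ≤ b := by omega
  rw [dot_eq n i j (le_of_lt hij) hjn c hc, l1_eq n i j (le_of_lt hij) hjn,
      dot_eq n i (i+1) (by omega) (by omega) c hc, l1_eq n i (i+1) (by omega) (by omega)]
  rw [ha1]
  have hsing : Finset.Ico (b - 1) b = {b - 1} := by
    rw [show b = (b - 1) + 1 by omega]; simp
  rw [hsing, Finset.sum_singleton]
  have hbm : ((b - 1 : ℕ) : ℝ) + 1 = (b : ℝ) := by push_cast [hb1]; ring
  have hden1 : ((i + 1 : ℕ) : ℝ) - i = 1 := by push_cast; ring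
  rw [hbm, hden1, div_one]
  have hden : (0:ℝ) < (j : ℝ) - i := by
    have : (i:ℝ) < j := by exact_mod_cast hij
    linarith
  have hcardR : (((Finset.Ico a b).card : ℕ) : ℝ) = (j:ℝ) - i := by
    rw [Nat.card_Ico, show b - a = j - i by omega]
    push_cast [le_of_lt hij]
    ring
  have hub : ∀ k ∈ Finset.Ico a b, ((k : ℝ) + 1) ≤ (b : ℝ) := by
    intro k hk
    simp only [Finset.mem_Ico] at hk
    have : k + 1 ≤ b := hk.2
    exact_mod_cast this
  have hconst : ∑ _k ∈ Finset.Ico a b, (b : ℝ) = ((j:ℝ) - i) * b := by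
    rw [Finset.sum_const, nsmul_eq_mul, hcardR]
  have hle : ∑ k ∈ Finset.Ico a b, ((k : ℝ) + 1) ≤ ((j : ℝ) - i) * b := by
    rw [← hconst]; exact Finset.sum_le_sum hub
  constructor
  · rw [div_le_iff₀ hden]
    linarith
  constructor
  · intro h
    by_contra hne
    have hj2 : a + 2 ≤ b := by omega
    have hlt : ∑ k ∈ Finset.Ico a b, ((k : ℝ) + 1) < ((j : ℝ) - i) * b := by
      rw [← hconst]
      apply Finset.sum_lt_sum hub
      refine ⟨a, by simp [Finset.mem_Ico]; omega, ?_⟩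
      have : a + 1 < b := by omega
      exact_mod_cast this
    rw [div_eq_iff (ne_of_gt hden)] at h
    nlinarith
  · intro h
    subst h
    rw [ha1, hsing, Finset.sum_singleton, hbm, hden1, div_one]
end

section
/- Let c_k = 2^k and suppose μ > 0 satisfies μ < 2^{n-i} ≤ 2μ for some 0 ≤ i < n. Then: (a) c·(x^{i+1} - x^i)/‖x^{i+1} - x^i‖₁ > μ, and (b) for every j with i+4 ≤ j ≤ n, c·(x^j - x^i)/‖x^j - x^i‖₁ ≤ μ. Hence any vertex x^j with c·(x^j - x^i) > μ‖x^j - x^i‖₁ satisfies i < j ≤ i+3. -/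
lemma myPowSum (m : ℕ) : ∑ k ∈ Finset.range m, (2:ℝ)^(k+1) = 2^(m+1) - 2 := by
  induction m with
  | zero => simp
  | succ m ih => rw [Finset.sum_range_succ, ih]; ring

lemma myIcoSum (a n : ℕ) (h : a ≤ n) :
    ∑ k ∈ Finset.Ico a n, (2:ℝ)^(k+1) = 2^(n+1) - 2^(a+1) := by
  rw [Finset.sum_Ico_eq_sub _ h, myPowSum, myPowSum]; ring

lemma dot_xv (n j : ℕ) (hj : j ≤ n) (c : Fin n → ℝ)
    (hc : ∀ k : Fin n, c k = 2 ^ ((k : ℕ) + 1)) :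
    dotp c (xv n j) = 2^(n+1) - 2^(n-j+1) := by
  unfold dotp xv
  simp only [hc, mul_ite, mul_one, mul_zero]
  rw [Fin.sum_univ_eq_sum_range (fun k => if n - j ≤ k then (2:ℝ)^(k+1) else 0)]
  rw [Finset.range_eq_Ico, ← Finset.sum_Ico_consecutive _ (Nat.zero_le (n-j)) (Nat.sub_le n j)]
  rw [Finset.sum_eq_zero (s := Finset.Ico 0 (n-j)) (fun k hk => by
      rw [Finset.mem_Ico] at hk; rw [if_neg (by omega)]), zero_add]
  have : (∑ k ∈ Finset.Ico (n-j) n, if n - j ≤ k then (2:ℝ)^(k+1) else 0)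
      = ∑ k ∈ Finset.Ico (n-j) n, (2:ℝ)^(k+1) :=
    Finset.sum_congr rfl (fun k hk => by
      rw [Finset.mem_Ico] at hk; rw [if_pos hk.1])
  rw [this, myIcoSum _ _ (Nat.sub_le n j)]

lemma l1_diff (n i j : ℕ) (hij : i ≤ j) (hj : j ≤ n) :
    l1 (fun k => xv n j k - xv n i k) = (j : ℝ) - i := by
  unfold l1 xv
  rw [Fin.sum_univ_eq_sum_range (fun k => |(if n - j ≤ k then (1:ℝ) else 0) - (if n - i ≤ k then 1 else 0)|)]
  rw [Finset.range_eq_Ico, ← Finset.sum_Ico_consecutive _ (Nat.zero_le (n-j)) (Nat.sub_le n j),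
    ← Finset.sum_Ico_consecutive (m := n - j) (n := n - i) (k := n) _ (by omega) (by omega)]
  rw [Finset.sum_eq_zero (s := Finset.Ico 0 (n-j)) (fun k hk => by
      rw [Finset.mem_Ico] at hk
      rw [if_neg (by omega), if_neg (by omega)]; simp), zero_add]
  rw [Finset.sum_eq_zero (s := Finset.Ico (n-i) n) (fun k hk => by
      rw [Finset.mem_Ico] at hk
      rw [if_pos (by omega), if_pos (by omega)]; simp), add_zero]
  have : (∑ k ∈ Finset.Ico (n-j) (n-i), |(if n - j ≤ k then (1:ℝ) else 0) - (if n - i ≤ k then 1 else 0)|)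
      = ∑ k ∈ Finset.Ico (n-j) (n-i), (1:ℝ) :=
    Finset.sum_congr rfl (fun k hk => by
      rw [Finset.mem_Ico] at hk
      rw [if_pos (by omega), if_neg (by omega)]; norm_num)
  rw [this, Finset.sum_const, Nat.card_Ico, nsmul_eq_mul, mul_one]
  have : n - i - (n - j) = j - i := by omega
  rw [this]
  push_cast [hij]
  ring

theorem stmt_6 (n i : ℕ) (hin : i < n) (μ : ℝ) (hμ : 0 < μ)
    (h1 : μ < 2 ^ (n - i)) (h2 : (2 : ℝ) ^ (n - i) ≤ 2 * μ)
    (c : Fin n → ℝ) (hc : ∀ k : Fin n, c k = 2 ^ ((k : ℕ) + 1)) :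
    (dotp c (fun k => xv n (i+1) k - xv n i k) / l1 (fun k => xv n (i+1) k - xv n i k) > μ)
    ∧ (∀ j : ℕ, i + 4 ≤ j → j ≤ n →
        dotp c (fun k => xv n (j) k - xv n i k) / l1 (fun k => xv n (j) k - xv n i k) ≤ μ)
    ∧ (∀ j : ℕ, j ≤ n →
        dotp c (fun k => xv n (j) k - xv n i k) > μ * l1 (fun k => xv n (j) k - xv n i k) →
        i < j ∧ j ≤ i + 3) := by
  have dsub : ∀ j, j ≤ n → dotp c (fun k => xv n j k - xv n i k)
      = 2^(n-i+1) - 2^(n-j+1) := by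
    intro j hj
    have h : dotp c (fun k => xv n j k - xv n i k) = dotp c (xv n j) - dotp c (xv n i) := by
      unfold dotp
      rw [← Finset.sum_sub_distrib]
      exact Finset.sum_congr rfl (fun k _ => by ring)
    rw [h, dot_xv n j hj c hc, dot_xv n i (le_of_lt hin) c hc]
    ring
  have parta : dotp c (fun k => xv n (i+1) k - xv n i k)
      / l1 (fun k => xv n (i+1) k - xv n i k) > μ := by
    rw [dsub (i+1) (by omega), l1_diff n i (i+1) (by omega) (by omega)]
    have e1 : n - (i+1) + 1 = n - i := by omega
    have e2 : n - i + 1 = (n - i) + 1 := rfl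
    rw [e1, e2]
    have hd : ((i:ℝ)+1) - i = 1 := by ring
    push_cast
    rw [hd, div_one, pow_succ]
    linarith
  have partb : ∀ j : ℕ, i + 4 ≤ j → j ≤ n →
      dotp c (fun k => xv n j k - xv n i k) / l1 (fun k => xv n j k - xv n i k) ≤ μ := by
    intro j h4 hjn
    rw [dsub j hjn, l1_diff n i j (by omega) hjn]
    have h4' : (i:ℝ) + 4 ≤ j := by exact_mod_cast h4
    rw [div_le_iff₀ (by linarith)]
    have hp : (0:ℝ) < 2^(n-j+1) := by positivity
    have h2' : (2:ℝ)^(n-i+1) ≤ 4*μ := by rw [pow_succ]; linarith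
    nlinarith
  refine ⟨parta, partb, ?_⟩
  intro j hjn hgt
  have hl1 : 0 ≤ l1 (fun k => xv n j k - xv n i k) :=
    Finset.sum_nonneg (fun k _ => abs_nonneg _)
  have hij : i < j := by
    by_contra hle
    push_neg at hle
    have hD := dsub j hjn
    have hpow : (2:ℝ)^(n-i+1) ≤ 2^(n-j+1) :=
      pow_le_pow_right₀ (by norm_num) (by omega)
    nlinarith [mul_nonneg hμ.le hl1]
  refine ⟨hij, ?_⟩
  by_contra hle
  push_neg at hle
  have hb := partb j (by omega) hjn
  rw [l1_diff n i j (le_of_lt hij) hjn] at hb hgt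
  have hji : (0:ℝ) < (j:ℝ) - i := by
    have : (i:ℝ) < j := by exact_mod_cast hij
    linarith
  rw [div_le_iff₀ hji] at hb
  linarith
end

section
/- Let α > 1 be real, a = ⌈α⌉, and c_k = a^k. Suppose μ > 0 satisfies μ < a^{n-i} ≤ αμ for some 0 ≤ i < n. If j satisfies i < j ≤ n and c·(x^j - x^i) > μ‖x^j - x^i‖₁, then α·a·(1 - a^{i-j})/(j - i) > 1. -/
theorem stmt_10 (n i j : ℕ) (hin : i < n) (hij : i < j) (hjn : j ≤ n)
    (α : ℝ) (hα : 1 < α) (μ : ℝ) (hμ : 0 < μ)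
    (h1 : μ < (⌈α⌉ : ℝ) ^ (n - i)) (h2 : (⌈α⌉ : ℝ) ^ (n - i) ≤ α * μ)
    (c : Fin n → ℝ) (hc : ∀ k : Fin n, c k = (⌈α⌉ : ℝ) ^ ((k : ℕ) + 1))
    (haug : dotp c (fun k => xv n (j) k - xv n i k) > μ * l1 (fun k => xv n (j) k - xv n i k)) :
    α * (⌈α⌉ : ℝ) * (1 - (⌈α⌉ : ℝ) ^ ((i : ℤ) - j)) / ((j : ℝ) - i) > 1 := by
  set A : ℝ := (⌈α⌉ : ℝ) with hAdef
  have hA2 : (2 : ℝ) ≤ A := by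
    have : (2 : ℤ) ≤ ⌈α⌉ := by
      have := Int.lt_ceil.mpr (by exact_mod_cast hα : ((1:ℤ):ℝ) < α)
      omega
    rw [hAdef]
    exact_mod_cast this
  have hA1 : (1 : ℝ) < A := by linarith
  have hA0 : (0 : ℝ) < A := by linarith
  have hα0 : (0 : ℝ) < α := by linarith
  -- the difference vector
  have hd : ∀ k : Fin n, xv n j k - xv n i k
      = if (k : ℕ) ∈ Finset.Ico (n - j) (n - i) then 1 else 0 := by
    intro k
    have hji : n - j ≤ n - i := Nat.sub_le_sub_left hij.le n
    unfold xv
    rcases le_or_gt (n - i) (k : ℕ) with h | h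
    · have h' : n - j ≤ (k : ℕ) := le_trans hji h
      simp [h, h', Finset.mem_Ico, not_lt.mpr h]
    · rcases le_or_gt (n - j) (k : ℕ) with h' | h'
      · simp [h', not_le.mpr h, Finset.mem_Ico, h]
      · simp [not_le.mpr h', not_le.mpr (lt_of_lt_of_le h' hji), Finset.mem_Ico]
  have hIco : Finset.Ico (n - j) (n - i) ⊆ Finset.range n := by
    intro m hm
    rw [Finset.mem_Ico] at hm
    rw [Finset.mem_range]
    omega
  -- l1 computation
  have hDnat : (n - i) - (n - j) = j - i := by omega
  have hl1 : l1 (fun k => xv n j k - xv n i k) = (j : ℝ) - i := by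
    unfold l1
    have step : (∑ k : Fin n, |xv n j k - xv n i k|)
        = ∑ m ∈ Finset.range n, (if m ∈ Finset.Ico (n - j) (n - i) then (1:ℝ) else 0) := by
      rw [← Fin.sum_univ_eq_sum_range (fun m => if m ∈ Finset.Ico (n - j) (n - i) then (1:ℝ) else 0) n]
      apply Finset.sum_congr rfl
      intro k _
      rw [hd k]
      by_cases hk : (k : ℕ) ∈ Finset.Ico (n - j) (n - i) <;> simp [hk]
    rw [step, Finset.sum_ite_mem, Finset.inter_eq_right.mpr hIco, Finset.sum_const,
      Nat.card_Ico, hDnat, nsmul_eq_mul, mul_one]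
    rw [Nat.cast_sub hij.le]
  -- dotp computation
  have hdot : dotp c (fun k => xv n j k - xv n i k)
      = ∑ m ∈ Finset.Ico (n - j) (n - i), A ^ (m + 1) := by
    unfold dotp
    have step : (∑ k : Fin n, c k * (xv n j k - xv n i k))
        = ∑ m ∈ Finset.range n, (if m ∈ Finset.Ico (n - j) (n - i) then A ^ (m + 1) else 0) := by
      rw [← Fin.sum_univ_eq_sum_range (fun m => if m ∈ Finset.Ico (n - j) (n - i) then A ^ (m + 1) else 0) n]
      apply Finset.sum_congr rfl
      intro k _
      rw [hd k, hc k]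
      by_cases hk : (k : ℕ) ∈ Finset.Ico (n - j) (n - i) <;> simp [hk]
    rw [step, Finset.sum_ite_mem, Finset.inter_eq_right.mpr hIco]
  set S : ℝ := ∑ m ∈ Finset.Ico (n - j) (n - i), A ^ (m + 1) with hSdef
  set D : ℝ := (j : ℝ) - i with hDdef
  have hD0 : 0 < D := by
    rw [hDdef]
    have : (i : ℝ) < j := by exact_mod_cast hij
    linarith
  rw [hdot, hl1] at haug
  -- S > μ * D > 0
  have hS0 : 0 < S := lt_trans (mul_pos hμ hD0) haug
  -- key: α * S > A ^ (n - i) * D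
  have hkey : A ^ (n - i) * D < α * S := by
    calc A ^ (n - i) * D ≤ (α * μ) * D := by
          apply mul_le_mul_of_nonneg_right h2 hD0.le
      _ = α * (μ * D) := by ring
      _ < α * S := by exact mul_lt_mul_of_pos_left haug hα0
  -- geometric sum: S * (A - 1) = A * (A ^ (n-i) - A ^ (n-j))
  have hgeom : S * (A - 1) = A * (A ^ (n - i) - A ^ (n - j)) := by
    have : S = A * ∑ m ∈ Finset.Ico (n - j) (n - i), A ^ m := by
      rw [Finset.mul_sum, hSdef]
      apply Finset.sum_congr rfl
      intro m _
      ring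
    rw [this, mul_assoc, geom_sum_Ico_mul A (Nat.sub_le_sub_left hij.le n)]
  set P : ℝ := A ^ (j - i) with hPdef
  have hP1 : 1 < P := one_lt_pow₀ hA1 (by omega)
  have hP0 : 0 < P := by linarith
  have hsplit : A ^ (n - i) = A ^ (n - j) * P := by
    rw [hPdef, ← pow_add]
    congr 1
    omega
  have hzpow : A ^ ((i : ℤ) - j) = 1 / P := by
    have h1 : ((i : ℤ) - j) = -((j - i : ℕ) : ℤ) := by
      push_cast [Nat.cast_sub hij.le]
      ring
    rw [h1, zpow_neg, zpow_natCast, ← hPdef, one_div]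
  -- conclude
  have hB0 : 0 < A ^ (n - j) := pow_pos hA0 _
  have hmain : P * D < α * A * (P - 1) := by
    have h3 : α * S ≤ α * S * (A - 1) := by
      nlinarith [mul_pos hα0 hS0]
    have h4 : α * S * (A - 1) = α * A * (P - 1) * A ^ (n - j) := by
      rw [mul_assoc α S (A - 1), hgeom, hsplit]
      ring
    have h5 : A ^ (n - i) * D = P * D * A ^ (n - j) := by
      rw [hsplit]; ring
    have := lt_of_lt_of_le hkey h3
    rw [h4, h5] at this
    exact lt_of_mul_lt_mul_right this hB0.le
  rw [hzpow, gt_iff_lt, lt_div_iff₀ hD0]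
  rw [show α * A * (1 - 1 / P) = α * A * (P - 1) / P by field_simp]
  rw [lt_div_iff₀ hP0]
  calc 1 * D * P = P * D := by ring
    _ < α * A * (P - 1) := hmain
end

section
/- For real α with 1 < α ≤ 4/3, the set of positive integers t satisfying α⌈α⌉(1 - ⌈α⌉^{-t})/t > 1 equals {1}; i.e., ω_α = 1. -/
theorem stmt_11 (α : ℝ) (h1 : 1 < α) (h2 : α ≤ 4 / 3) :
    {t : ℕ | 0 < t ∧ α * (⌈α⌉ : ℝ) * (1 - (⌈α⌉ : ℝ) ^ (-(t : ℤ))) / (t : ℝ) > 1} = {1} := by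
  have hc : ⌈α⌉ = 2 := by
    rw [Int.ceil_eq_iff]
    constructor <;> push_cast <;> linarith
  rw [hc]
  ext t
  simp only [Set.mem_setOf_eq, Set.mem_singleton_iff]
  push_cast
  constructor
  · rintro ⟨ht, hgt⟩
    by_contra hne
    have ht2 : 2 ≤ t := by omega
    have hpow : (2:ℝ) ^ (-(t:ℤ)) = ((2:ℝ)^t)⁻¹ := by
      rw [zpow_neg, zpow_natCast]
    rw [hpow] at hgt
    have hpt : (0:ℝ) < 2 ^ t := by positivity
    have hptinv : (0:ℝ) < ((2:ℝ)^t)⁻¹ := by positivity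
    have htR : (2:ℝ) ≤ t := by exact_mod_cast ht2
    have hle : α * 2 * (1 - ((2:ℝ)^t)⁻¹) ≤ t := by
      rcases eq_or_lt_of_le ht2 with h | h
      · have : t = 2 := h.symm
        subst this
        norm_num
        linarith
      · have ht3 : 3 ≤ t := by omega
        have ht3R : (3:ℝ) ≤ t := by exact_mod_cast ht3
        have h1' : 1 - ((2:ℝ)^t)⁻¹ < 1 := by linarith
        have h0' : 0 < 1 - ((2:ℝ)^t)⁻¹ := by
          have : ((2:ℝ)^t)⁻¹ ≤ (2:ℝ)⁻¹ := by
            apply inv_anti₀ (by norm_num)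
            calc (2:ℝ) = 2^1 := by norm_num
            _ ≤ 2^t := by apply pow_le_pow_right₀ (by norm_num) (by omega)
          linarith
        nlinarith
    have htpos : (0:ℝ) < t := by linarith
    rw [gt_iff_lt, lt_div_iff₀ htpos] at hgt
    linarith
  · rintro rfl
    refine ⟨one_pos, ?_⟩
    norm_num
    linarith
end

section
/- For real α with 4/3 < α ≤ 12/7, the set of positive integers t satisfying α⌈α⌉(1 - ⌈α⌉^{-t})/t > 1 equals {1, 2}; i.e., ω_α = 2. -/
theorem stmt_12 (α : ℝ) (h1 : 4 / 3 < α) (h2 : α ≤ 12 / 7) :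
    {t : ℕ | 0 < t ∧ α * (⌈α⌉ : ℝ) * (1 - (⌈α⌉ : ℝ) ^ (-(t : ℤ))) / (t : ℝ) > 1} = {1, 2} := by
  have hc : (⌈α⌉ : ℤ) = 2 := by
    rw [Int.ceil_eq_iff]
    constructor <;> push_cast <;> linarith
  ext t
  simp only [Set.mem_setOf_eq, Set.mem_insert_iff, Set.mem_singleton_iff, hc]
  push_cast
  constructor
  · rintro ⟨ht, hineq⟩
    by_contra h
    push_neg at h
    obtain ⟨h1', h2'⟩ := h
    have ht3 : 3 ≤ t := by omega
    have htpos : (0 : ℝ) < t := by positivity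
    rw [gt_iff_lt, lt_div_iff₀ htpos, one_mul] at hineq
    rcases Nat.lt_or_ge t 4 with h4 | h4
    · have : t = 3 := by omega
      subst this
      norm_num at hineq
      linarith
    · have ht4 : (4 : ℝ) ≤ t := by exact_mod_cast h4
      have hz : (0 : ℝ) < (2 : ℝ) ^ (-(t : ℤ)) := by positivity
      nlinarith
  · rintro (rfl | rfl) <;> norm_num <;> linarith
end

section
/- For real α with 12/7 < α ≤ 2, the set of positive integers t satisfying α⌈α⌉(1 - ⌈α⌉^{-t})/t > 1 equals {1, 2, 3}; i.e., ω_α = 3. -/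
theorem stmt_13 (α : ℝ) (h1 : 12 / 7 < α) (h2 : α ≤ 2) :
    {t : ℕ | 0 < t ∧ α * (⌈α⌉ : ℝ) * (1 - (⌈α⌉ : ℝ) ^ (-(t : ℤ))) / (t : ℝ) > 1} = {1, 2, 3} := by
  have hc : (⌈α⌉ : ℤ) = 2 := by
    rw [Int.ceil_eq_iff]
    constructor
    · push_cast; linarith
    · push_cast; linarith
  ext t
  simp only [Set.mem_setOf_eq, Set.mem_insert_iff, Set.mem_singleton_iff, hc]
  push_cast
  constructor
  · rintro ⟨ht, hgt⟩
    by_contra h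
    push_neg at h
    obtain ⟨h1', h2', h3'⟩ := h
    have ht4 : 4 ≤ t := by omega
    have htR : (4:ℝ) ≤ t := by exact_mod_cast ht4
    have htpos : (0:ℝ) < t := by linarith
    have hpow : (0:ℝ) < (2:ℝ)^(-(t:ℤ)) := by positivity
    rw [gt_iff_lt, lt_div_iff₀ htpos] at hgt
    nlinarith
  · rintro (rfl | rfl | rfl) <;>
      refine ⟨by norm_num, ?_⟩ <;> norm_num <;> linarith
end
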